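/- arXiv:math/0601371 — 4 statements merged into one kernel-verified Lean document; each statement's English description precedes it below -/
import Mathlib

section
/- Euler's pentagonal-type identity for the Dedekind eta function: for τ in the upper half-plane, exp(πiτ/12) · ∏_{k=1}^∞ (1 − exp(2kπiτ)) = exp(πiτ/12) · ∑_{k∈ℤ} (−1)^k exp((3k²+k)πiτ); equivalently ∏_{k=1}^∞ (1 − q^k) = ∑_{k∈ℤ} (−1)^k q^{(3k²+k)/2} with q = exp(2πiτ). -/
/-!
Mathlib proves the pentagonal number theorem in an arbitrary topological ring,
`Pentagonal.tprod_one_sub_pow`, provided the series and products of its telescoping argument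
converge and its remainder terms tend to zero. For `‖x‖ < 1` in a complete normed ring all of
them are dominated by geometric series, because every partial product `∏ (1 - x ^ (k + i + 1))`
has norm at most `exp (1 - ‖x‖)⁻¹`. The theorem is the case `x = exp (2πiτ)`, where
`(3k² + k)πiτ = pentagonal (-k) · 2πiτ`.
-/

open scoped Real
open Complex Filter Topology Finset

section SeminormedRing

variable {R : Type*} [SeminormedRing R]

lemma norm_neg_one_pow_mul (m : ℕ) (y : R) : ‖(-1) ^ m * y‖ = ‖y‖ := by
  rcases neg_one_pow_eq_or R m with h | h <;> simp [h]

variable [NormOneClass R] {x : R}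

lemma norm_pow_le_pow_of_le (hx : ‖x‖ ≤ 1) {m n : ℕ} (h : m ≤ n) : ‖x ^ n‖ ≤ ‖x‖ ^ m :=
  (norm_pow_le x n).trans (pow_le_pow_of_le_one (norm_nonneg x) hx h)

end SeminormedRing

namespace Pentagonal

variable {R : Type*} [NormedCommRing R] [NormOneClass R] {x : R}

lemma multipliable_one_sub_pow [CompleteSpace R] (hx : ‖x‖ < 1) (k : ℕ) :
    Multipliable fun n ↦ 1 - x ^ (n + k + 1) := by
  simp_rw [sub_eq_add_neg]
  refine multipliable_one_add_of_summable ?_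
  simp_rw [norm_neg]
  exact (summable_geometric_of_lt_one (norm_nonneg x) hx).of_nonneg_of_le (fun _ ↦ norm_nonneg _)
    fun n ↦ norm_pow_le_pow_of_le hx.le (by omega)

lemma norm_prod_one_sub_pow_le (hx : ‖x‖ < 1) (k n : ℕ) :
    ‖∏ i ∈ range n, (1 - x ^ (k + i + 1))‖ ≤ Real.exp (1 - ‖x‖)⁻¹ := by
  have hsum : ∑ i ∈ range n, ‖-x ^ (k + i + 1)‖ ≤ (1 - ‖x‖)⁻¹ := by
    rw [← tsum_geometric_of_lt_one (norm_nonneg x) hx]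
    refine (sum_le_sum fun i _ ↦ ?_).trans
      ((summable_geometric_of_lt_one (norm_nonneg x) hx).sum_le_tsum _ fun i _ ↦ by positivity)
    rw [norm_neg]
    exact norm_pow_le_pow_of_le hx.le (by omega)
  calc ‖∏ i ∈ range n, (1 - x ^ (k + i + 1))‖
      ≤ ‖∏ i ∈ range n, (1 + -x ^ (k + i + 1)) - 1‖ + 1 := by
        simpa [← sub_eq_add_neg] using
          norm_le_norm_sub_add (∏ i ∈ range n, (1 - x ^ (k + i + 1))) 1
    _ ≤ Real.exp (∑ i ∈ range n, ‖-x ^ (k + i + 1)‖) := by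
        linarith [(range n).norm_prod_one_add_sub_one_le fun i ↦ -x ^ (k + i + 1)]
    _ ≤ Real.exp (1 - ‖x‖)⁻¹ := Real.exp_le_exp.2 hsum

lemma norm_pow_mul_prod_one_sub_pow_le (hx : ‖x‖ < 1) (k n : ℕ) :
    ‖x ^ ((k + 1) * n) * ∏ i ∈ range (n + 1), (1 - x ^ (k + i + 1))‖ ≤
      Real.exp (1 - ‖x‖)⁻¹ * ‖x‖ ^ n := by
  rw [mul_comm (Real.exp _)]
  exact (norm_mul_le _ _).trans <| mul_le_mul (norm_pow_le_pow_of_le hx.le (by nlinarith))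
    (norm_prod_one_sub_pow_le hx k (n + 1)) (norm_nonneg _) (by positivity)

lemma norm_tsum_pow_mul_prod_one_sub_pow_le (hx : ‖x‖ < 1) (k : ℕ) :
    ‖∑' n, x ^ ((k + 1) * n) * ∏ i ∈ range (n + 1), (1 - x ^ (k + i + 1))‖ ≤
      Real.exp (1 - ‖x‖)⁻¹ * (1 - ‖x‖)⁻¹ :=
  tsum_of_norm_bounded ((hasSum_geometric_of_lt_one (norm_nonneg x) hx).mul_left _)
    (norm_pow_mul_prod_one_sub_pow_le hx k)

lemma tendsto_pentagonal_remainder (hx : ‖x‖ < 1) :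
    Tendsto (fun k ↦ (-1) ^ (k + 1) * x ^ ((k + 1) * (3 * k + 4) / 2) *
      ∑' n, x ^ ((k + 1) * n) * ∏ i ∈ range (n + 1), (1 - x ^ (k + i + 1))) atTop (𝓝 0) := by
  set C := Real.exp (1 - ‖x‖)⁻¹ * (1 - ‖x‖)⁻¹
  refine squeeze_zero_norm (a := fun k ↦ ‖x‖ ^ k * C) (fun k ↦ ?_) ?_
  · have hk : k ≤ (k + 1) * (3 * k + 4) / 2 := by
      rw [Nat.le_div_iff_mul_le two_pos]
      nlinarith
    rw [mul_assoc, norm_neg_one_pow_mul]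
    exact (norm_mul_le _ _).trans <| mul_le_mul (norm_pow_le_pow_of_le hx.le hk)
      (norm_tsum_pow_mul_prod_one_sub_pow_le hx k) (norm_nonneg _) (by positivity)
  · simpa using (tendsto_pow_atTop_nhds_zero_of_lt_one (norm_nonneg x) hx).mul_const C

variable [CompleteSpace R]

lemma summable_pow_mul_prod_one_sub_pow (hx : ‖x‖ < 1) (k : ℕ) :
    Summable fun n ↦ x ^ ((k + 1) * n) * ∏ i ∈ range (n + 1), (1 - x ^ (k + i + 1)) :=
  ((summable_geometric_of_lt_one (norm_nonneg x) hx).mul_left _).of_norm_bounded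
    (norm_pow_mul_prod_one_sub_pow_le hx k)

lemma summable_negOnePow_mul_pow_pentagonal (hx : ‖x‖ < 1) :
    Summable fun k : ℤ ↦ (k.negOnePow : R) * x ^ pentagonal k :=
  ((summable_geometric_of_lt_one (norm_nonneg x) hx).comp_injective
    pentagonal_injective).of_norm_bounded fun k ↦ by
      simpa [Int.coe_negOnePow, norm_neg_one_pow_mul] using norm_pow_le x (pentagonal k)

theorem hasSum_negOnePow_mul_pow_pentagonal (hx : ‖x‖ < 1) :
    HasSum (fun k : ℤ ↦ (k.negOnePow : R) * x ^ pentagonal k) (∏' n, (1 - x ^ (n + 1))) := by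
  have hsum := (summable_negOnePow_mul_pow_pentagonal hx).hasSum
  have hpaired : HasSum (fun k : ℕ ↦ (-1) ^ k * (x ^ pentagonal (-k) - x ^ pentagonal (k + 1)))
      (∑' k : ℤ, (k.negOnePow : R) * x ^ pentagonal k) := by
    convert ((Equiv.neg ℤ).hasSum_iff.2 hsum).nat_add_neg_add_one using 2 with k
    simp only [Function.comp_apply, Equiv.neg_apply, neg_neg, Int.negOnePow_neg,
      Int.negOnePow_succ, Units.val_neg, Int.cast_neg, Int.cast_negOnePow_natCast]
    ring
  convert hsum using 1
  rw [tprod_one_sub_pow (tendsto_pow_atTop_nhds_zero_of_norm_lt_one hx)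
    (summable_pow_mul_prod_one_sub_pow hx) (multipliable_one_sub_pow hx) hpaired.summable
    (tendsto_pentagonal_remainder hx), hpaired.tsum_eq]

end Pentagonal

theorem euler_pentagonal (τ : ℂ) (hτ : 0 < τ.im) :
    Complex.exp ((π : ℂ) * I * τ / 12) *
        (∏' k : ℕ, (1 - Complex.exp (2 * ((k : ℂ) + 1) * (π : ℂ) * I * τ))) =
      Complex.exp ((π : ℂ) * I * τ / 12) *
        ∑' k : ℤ, (-1 : ℂ) ^ k *
          Complex.exp ((3 * (k : ℂ)^2 + (k : ℂ)) * (π : ℂ) * I * τ) := by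
  set q := Complex.exp (2 * π * I * τ)
  have hq : ‖q‖ < 1 := UpperHalfPlane.norm_exp_two_pi_I_lt_one ⟨τ, hτ⟩
  have hfactor (k : ℕ) : Complex.exp (2 * ((k : ℂ) + 1) * π * I * τ) = q ^ (k + 1) := by
    rw [← Complex.exp_nat_mul]
    congr 1
    push_cast
    ring
  have hterm (k : ℤ) : (-1 : ℂ) ^ k * Complex.exp ((3 * (k : ℂ) ^ 2 + k) * π * I * τ) =
      ((-k).negOnePow : ℂ) * q ^ pentagonal (-k) := by
    have h2 : (2 * pentagonal (-k) : ℂ) = k * (3 * k + 1) := by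
      exact_mod_cast two_mul_natCast_pentagonal_neg k
    rw [← Complex.exp_nat_mul, Int.negOnePow_neg, Int.cast_negOnePow]
    congr 2
    linear_combination -(π * I * τ) * h2
  congr 1
  simp_rw [hfactor, hterm]
  exact ((Equiv.neg ℤ).hasSum_iff.2
    (Pentagonal.hasSum_negOnePow_mul_pow_pentagonal hq)).tsum_eq.symm
end

section
/- Jacobi's quartic theta identity at the origin: for every τ in the upper half-plane, ϑ₃(τ)⁴ = ϑ₂(τ)⁴ + ϑ₄(τ)⁴, where ϑⱼ(τ) = θⱼ(0|τ) are the theta constants. -/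
open scoped Real
open Complex

noncomputable def jacobiθ₁ (x τ : ℂ) : ℂ :=
  -I * ∑' k : ℤ, (-1 : ℂ) ^ k *
    Complex.exp ((π : ℂ) * I * ((k : ℂ) + 1/2)^2 * τ + (2*(k : ℂ)+1) * (π : ℂ) * I * x)

noncomputable def jacobiθ₂ (x τ : ℂ) : ℂ :=
  ∑' k : ℤ,
    Complex.exp ((π : ℂ) * I * ((k : ℂ) + 1/2)^2 * τ + (2*(k : ℂ)+1) * (π : ℂ) * I * x)

noncomputable def jacobiθ₃ (x τ : ℂ) : ℂ :=
  ∑' k : ℤ, Complex.exp ((π : ℂ) * I * (k : ℂ)^2 * τ + 2 * (k : ℂ) * (π : ℂ) * I * x)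

noncomputable def jacobiθ₄ (x τ : ℂ) : ℂ :=
  ∑' k : ℤ, (-1 : ℂ) ^ k *
    Complex.exp ((π : ℂ) * I * (k : ℂ)^2 * τ + 2 * (k : ℂ) * (π : ℂ) * I * x)

/-! With `ϑ(c, τ) = ∑ₙ exp(πi(n + c)²τ)` we have `ϑ₃ = ϑ(0, ·)`, `ϑ₂ = ϑ(1/2, ·)` and
`ϑ₄(τ) = ϑ(0, τ + 1)`. Grouping the pairs `(m, n) ∈ ℤ²` by the parity of `m + n`, i.e. writing
`(m, n) = (a + b, a - b)` or `(a + b + 1, a - b)`, and using `(u + v)² + (u - v)² = 2u² + 2v²` turns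
`ϑ(c, τ) ϑ(d, τ)` into a sum of two products of theta constants at `2τ`. Together with
`ϑ(0, τ + 2) = ϑ(0, τ)` and `ϑ(1/2, τ + 2) = i ϑ(1/2, τ)` this gives the duplication formulas
`ϑ₃(τ)² = A² + B²`, `ϑ₂(τ)² = 2AB`, `ϑ₄(τ)² = A² - B²` with `A = ϑ₃(2τ)`, `B = ϑ₂(2τ)`, and the
quartic identity is `(A² + B²)² = (2AB)² + (A² - B²)²`. -/

noncomputable def intProdSumEquivAddSub : (ℤ × ℤ) ⊕ (ℤ × ℤ) ≃ ℤ × ℤ :=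
  Equiv.ofBijective
    (Sum.elim (fun p => (p.1 + p.2, p.1 - p.2)) (fun p => (p.1 + p.2 + 1, p.1 - p.2))) <| by
    refine ⟨?_, fun ⟨m, n⟩ => ?_⟩
    · rintro (⟨a, b⟩ | ⟨a, b⟩) (⟨a', b'⟩ | ⟨a', b'⟩) h <;>
        simp only [Sum.elim_inl, Sum.elim_inr, Prod.mk.injEq, Sum.inl.injEq, Sum.inr.injEq,
          reduceCtorEq] at h ⊢ <;> omega
    · rcases Int.emod_two_eq_zero_or_one (m + n) with h | h
      · exact ⟨.inl ((m + n) / 2, (m - n) / 2), by simp only [Sum.elim_inl, Prod.mk.injEq]; omega⟩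
      · exact ⟨.inr ((m + n) / 2, (m - n - 1) / 2),
          by simp only [Sum.elim_inr, Prod.mk.injEq]; omega⟩

lemma tsum_int_prod_eq_tsum_add_tsum {E : Type*} [AddCommGroup E] [UniformSpace E]
    [IsUniformAddGroup E] [CompleteSpace E] [T2Space E] {f : ℤ × ℤ → E} (hf : Summable f) :
    ∑' p, f p =
      ∑' p : ℤ × ℤ, f (p.1 + p.2, p.1 - p.2) + ∑' p : ℤ × ℤ, f (p.1 + p.2 + 1, p.1 - p.2) := by
  have hf' := intProdSumEquivAddSub.summable_iff.mpr hf
  rw [← intProdSumEquivAddSub.tsum_eq]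
  exact Summable.tsum_sum (f := f ∘ intProdSumEquivAddSub) (hf'.comp_injective Sum.inl_injective)
    (hf'.comp_injective Sum.inr_injective)

noncomputable def thetaTerm (x τ : ℂ) : ℂ := cexp (π * I * x ^ 2 * τ)

lemma thetaTerm_add_mul_thetaTerm_sub (u v τ : ℂ) :
    thetaTerm (u + v) τ * thetaTerm (u - v) τ = thetaTerm u (2 * τ) * thetaTerm v (2 * τ) := by
  simp only [thetaTerm, ← exp_add]
  congr 1
  ring

lemma thetaTerm_add_right (x τ σ : ℂ) :
    thetaTerm x (τ + σ) = cexp (π * I * x ^ 2 * σ) * thetaTerm x τ := by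
  rw [thetaTerm, thetaTerm, ← exp_add]
  congr 1
  ring

lemma summable_thetaTerm (c : ℂ) {τ : ℂ} (hτ : 0 < τ.im) :
    Summable fun n : ℤ => thetaTerm (n + c) τ := by
  refine (((summable_jacobiTheta₂_term_iff (c * τ) τ).mpr hτ).mul_left (thetaTerm c τ)).congr
    fun n => ?_
  rw [jacobiTheta₂_term, thetaTerm, thetaTerm, ← exp_add]
  congr 1
  ring

lemma summable_thetaTerm_mul_thetaTerm {τ : ℂ} (hτ : 0 < τ.im) (c d : ℂ) :
    Summable fun p : ℤ × ℤ => thetaTerm (p.1 + c) τ * thetaTerm (p.2 + d) τ :=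
  summable_mul_of_summable_norm (f := fun n : ℤ => thetaTerm (n + c) τ)
    (g := fun n : ℤ => thetaTerm (n + d) τ) (summable_thetaTerm c hτ).norm
    (summable_thetaTerm d hτ).norm

noncomputable def shiftedTheta (c τ : ℂ) : ℂ := ∑' n : ℤ, thetaTerm (n + c) τ

lemma shiftedTheta_add_one (c τ : ℂ) : shiftedTheta (c + 1) τ = shiftedTheta c τ := by
  rw [shiftedTheta, shiftedTheta,
    ← (Equiv.addRight (1 : ℤ)).tsum_eq (fun n : ℤ => thetaTerm (n + c) τ)]
  simp only [Equiv.coe_addRight, Int.cast_add, Int.cast_one, add_right_comm _ (1 : ℂ), add_assoc]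

lemma shiftedTheta_mul_shiftedTheta_eq_tsum {τ : ℂ} (hτ : 0 < τ.im) (c d : ℂ) :
    shiftedTheta c τ * shiftedTheta d τ =
      ∑' p : ℤ × ℤ, thetaTerm (p.1 + c) τ * thetaTerm (p.2 + d) τ :=
  tsum_mul_tsum_of_summable_norm (summable_thetaTerm c hτ).norm (summable_thetaTerm d hτ).norm

lemma shiftedTheta_mul_shiftedTheta {τ : ℂ} (hτ : 0 < τ.im) (c d : ℂ) :
    shiftedTheta c τ * shiftedTheta d τ =
      shiftedTheta ((c + d) / 2) (2 * τ) * shiftedTheta ((c - d) / 2) (2 * τ) +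
        shiftedTheta ((c + d + 1) / 2) (2 * τ) * shiftedTheta ((c - d + 1) / 2) (2 * τ) := by
  have h2τ : 0 < (2 * τ).im := by simpa using hτ
  rw [shiftedTheta_mul_shiftedTheta_eq_tsum hτ, shiftedTheta_mul_shiftedTheta_eq_tsum h2τ,
    shiftedTheta_mul_shiftedTheta_eq_tsum h2τ,
    tsum_int_prod_eq_tsum_add_tsum (summable_thetaTerm_mul_thetaTerm hτ c d)]
  congr 1 <;> refine tsum_congr fun p => ?_ <;> rw [← thetaTerm_add_mul_thetaTerm_sub] <;>
    congr 2 <;> push_cast <;> ring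

lemma shiftedTheta_zero_add_two (τ : ℂ) : shiftedTheta 0 (τ + 2) = shiftedTheta 0 τ := by
  refine tsum_congr fun n => ?_
  have h : π * I * ((n : ℂ) + 0) ^ 2 * 2 = ((n ^ 2 : ℤ) : ℂ) * (2 * π * I) := by push_cast; ring
  rw [thetaTerm_add_right, h, exp_int_mul_two_pi_mul_I, one_mul]

lemma shiftedTheta_half_add_two (τ : ℂ) :
    shiftedTheta (1 / 2) (τ + 2) = I * shiftedTheta (1 / 2) τ := by
  rw [shiftedTheta, shiftedTheta, ← tsum_mul_left]
  refine tsum_congr fun n => ?_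
  have h : π * I * ((n : ℂ) + 1 / 2) ^ 2 * 2 =
      ((n ^ 2 + n : ℤ) : ℂ) * (2 * π * I) + π / 2 * I := by
    push_cast; ring
  rw [thetaTerm_add_right, h, exp_add, exp_int_mul_two_pi_mul_I, exp_pi_div_two_mul_I, one_mul]

lemma jacobiθ₃_zero (τ : ℂ) : jacobiθ₃ 0 τ = shiftedTheta 0 τ :=
  tsum_congr fun n => by simp [thetaTerm]

lemma jacobiθ₂_zero (τ : ℂ) : jacobiθ₂ 0 τ = shiftedTheta (1 / 2) τ :=
  tsum_congr fun n => by simp [thetaTerm]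

lemma jacobiθ₄_zero (τ : ℂ) : jacobiθ₄ 0 τ = shiftedTheta 0 (τ + 1) := by
  refine tsum_congr fun n => ?_
  have h : π * I * ((n : ℂ) + 0) ^ 2 * 1 = ((n * (n - 1) + n : ℤ) : ℂ) * (π * I) := by
    push_cast; ring
  rw [thetaTerm_add_right, h, exp_int_mul, exp_pi_mul_I, zpow_add₀ (by norm_num),
    (Int.even_mul_pred_self n).neg_one_zpow, one_mul, thetaTerm]
  simp

lemma jacobiθ₃_zero_sq {τ : ℂ} (hτ : 0 < τ.im) :
    jacobiθ₃ 0 τ ^ 2 = jacobiθ₃ 0 (2 * τ) ^ 2 + jacobiθ₂ 0 (2 * τ) ^ 2 := by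
  simpa [sq, jacobiθ₃_zero, jacobiθ₂_zero] using shiftedTheta_mul_shiftedTheta hτ 0 0

lemma jacobiθ₂_zero_sq {τ : ℂ} (hτ : 0 < τ.im) :
    jacobiθ₂ 0 τ ^ 2 = 2 * jacobiθ₂ 0 (2 * τ) * jacobiθ₃ 0 (2 * τ) := by
  have h₁ : shiftedTheta 1 (2 * τ) = shiftedTheta 0 (2 * τ) := by
    simpa using shiftedTheta_add_one 0 (2 * τ)
  have h := shiftedTheta_mul_shiftedTheta hτ (1 / 2) (1 / 2)
  norm_num only [h₁] at h
  rw [jacobiθ₃_zero, jacobiθ₂_zero, jacobiθ₂_zero, sq, h]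
  ring

lemma jacobiθ₄_zero_sq {τ : ℂ} (hτ : 0 < τ.im) :
    jacobiθ₄ 0 τ ^ 2 = jacobiθ₃ 0 (2 * τ) ^ 2 - jacobiθ₂ 0 (2 * τ) ^ 2 := by
  have h := shiftedTheta_mul_shiftedTheta (τ := τ + 1) (by simpa using hτ) 0 0
  norm_num only [mul_add_one, shiftedTheta_zero_add_two, shiftedTheta_half_add_two] at h
  rw [jacobiθ₃_zero, jacobiθ₂_zero, jacobiθ₄_zero, sq, h]
  linear_combination shiftedTheta (1 / 2) (2 * τ) ^ 2 * I_sq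

theorem jacobi_quartic_identity (τ : ℂ) (hτ : 0 < τ.im) :
    jacobiθ₃ 0 τ ^ 4 = jacobiθ₂ 0 τ ^ 4 + jacobiθ₄ 0 τ ^ 4 := by
  have sq_sq (z : ℂ) : z ^ 4 = (z ^ 2) ^ 2 := by ring
  rw [sq_sq, sq_sq, sq_sq, jacobiθ₃_zero_sq hτ, jacobiθ₂_zero_sq hτ, jacobiθ₄_zero_sq hτ]
  ring
end

section
/- The generalized quartic theta identity: for all x ∈ ℂ and τ in the upper half-plane, θ₁(x|τ)⁴ + θ₃(x|τ)⁴ = θ₂(x|τ)⁴ + θ₄(x|τ)⁴. -/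
open scoped Real
open Complex

/-!
Expanding the fourth powers, `θ₃⁴ - θ₄⁴` and `θ₂⁴ - θ₁⁴` are both twice the sum of
`∏ⱼ exp (πi rⱼ² τ + 2πi rⱼ x)` over the quadruples `r` with odd coordinate sum, taken in `ℤ⁴`
and in `(ℤ + 1/2)⁴` respectively. The map `r ↦ (s/2 - rⱼ)ⱼ`, `s = ∑ⱼ rⱼ`, preserves both
`∑ⱼ rⱼ²` and `∑ⱼ rⱼ`, hence the summand, and it carries the odd-sum quadruples of `ℤ⁴`
bijectively onto those of `(ℤ + 1/2)⁴`.
-/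

namespace JacobiQuartic

section FourthPower

variable {ι R : Type*}

def quadProd [Mul R] (u : ι → R) (v : ι × ι × ι × ι) : R :=
  u v.1 * u v.2.1 * u v.2.2.1 * u v.2.2.2

variable [NormedRing R] {u : ι → R}

lemma summable_norm_quadProd (hu : Summable fun n => ‖u n‖) :
    Summable fun v => ‖quadProd u v‖ := by
  simpa only [quadProd, mul_assoc] using hu.mul_norm <| hu.mul_norm <| hu.mul_norm hu

lemma tsum_pow_four [CompleteSpace R] (hu : Summable fun n => ‖u n‖) :
    (∑' n, u n) ^ 4 = ∑' v, quadProd u v := by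
  rw [pow_succ', pow_three, tsum_mul_tsum_of_summable_norm hu hu,
    tsum_mul_tsum_of_summable_norm hu (hu.mul_norm hu),
    tsum_mul_tsum_of_summable_norm hu (hu.mul_norm <| hu.mul_norm hu)]
  simp only [quadProd, mul_assoc]

end FourthPower

def quadSum (v : ℤ × ℤ × ℤ × ℤ) : ℤ := v.1 + v.2.1 + v.2.2.1 + v.2.2.2

section Alternating

variable {𝕜 : Type*} [NormedField 𝕜]

lemma quadProd_neg_one_zpow_mul (u : ℤ → 𝕜) (v : ℤ × ℤ × ℤ × ℤ) :
    quadProd (fun n => (-1 : 𝕜) ^ n * u n) v = (-1) ^ quadSum v * quadProd u v := by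
  simp only [quadProd, quadSum, zpow_add₀ (by norm_num : (-1 : 𝕜) ≠ 0)]
  ring

lemma tsum_pow_four_sub_tsum_alternating_pow_four [CompleteSpace 𝕜] {u : ℤ → 𝕜}
    (hu : Summable fun n => ‖u n‖) :
    (∑' n, u n) ^ 4 - (∑' n, (-1) ^ n * u n) ^ 4 =
      2 * ∑' v, {v | Odd (quadSum v)}.indicator (quadProd u) v := by
  have hu' : Summable fun n => ‖(-1 : 𝕜) ^ n * u n‖ := by
    simpa only [norm_mul, norm_zpow, norm_neg, norm_one, one_zpow, one_mul] using hu
  have hU := (summable_norm_quadProd hu).of_norm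
  rw [tsum_pow_four hu, tsum_pow_four hu', ← hU.tsum_sub (summable_norm_quadProd hu').of_norm,
    ← tsum_mul_left]
  refine tsum_congr fun v => ?_
  rw [quadProd_neg_one_zpow_mul]
  rcases Int.even_or_odd (quadSum v) with hv | hv
  · simp [hv.neg_one_zpow, Int.not_odd_iff_even.2 hv]
  · simp only [hv.neg_one_zpow, Set.indicator_of_mem (show v ∈ {v | Odd (quadSum v)} from hv)]
    ring

end Alternating

/-- On odd-sum quadruples this is `r ↦ (s/2 - rⱼ)ⱼ` from `ℤ⁴` to `(ℤ + 1/2)⁴`, the target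
indexed by `k ↦ k + 1/2`; rounding `s/2` down extends it to a bijection of `ℤ⁴`. -/
def quadReflect : (ℤ × ℤ × ℤ × ℤ) ≃ (ℤ × ℤ × ℤ × ℤ) where
  toFun v := (quadSum v / 2 - v.1, quadSum v / 2 - v.2.1, quadSum v / 2 - v.2.2.1,
    quadSum v / 2 - v.2.2.2)
  invFun v := ((quadSum v + 1) / 2 - v.1, (quadSum v + 1) / 2 - v.2.1,
    (quadSum v + 1) / 2 - v.2.2.1, (quadSum v + 1) / 2 - v.2.2.2)
  left_inv := by
    rintro ⟨a, b, c, d⟩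
    simp only [quadSum, Prod.ext_iff]
    omega
  right_inv := by
    rintro ⟨a, b, c, d⟩
    simp only [quadSum, Prod.ext_iff]
    omega

lemma odd_quadSum_quadReflect_iff (v : ℤ × ℤ × ℤ × ℤ) :
    Odd (quadSum (quadReflect v)) ↔ Odd (quadSum v) := by
  obtain ⟨a, b, c, d⟩ := v
  simp only [quadReflect, Equiv.coe_fn_mk, quadSum, Int.odd_iff]
  omega

lemma exists_quadReflect_eq_of_odd {a b c d : ℤ} (h : Odd (quadSum (a, b, c, d))) :
    ∃ m : ℤ, 2 * m + 1 = a + b + c + d ∧ quadReflect (a, b, c, d) = (m - a, m - b, m - c, m - d) :=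
  ⟨quadSum (a, b, c, d) / 2, by
    simp only [quadSum, Int.odd_iff] at h ⊢
    omega, rfl⟩

noncomputable def thetaTerm (x τ r : ℂ) : ℂ := cexp (π * I * r ^ 2 * τ + 2 * π * I * r * x)

lemma thetaTerm_int_add (x τ r : ℂ) (k : ℤ) :
    thetaTerm x τ (k + r) = thetaTerm x τ r * jacobiTheta₂_term k (x + r * τ) τ := by
  rw [thetaTerm, thetaTerm, jacobiTheta₂_term, ← Complex.exp_add]
  congr 1
  ring

lemma summable_norm_thetaTerm_int_add (x r : ℂ) {τ : ℂ} (hτ : 0 < τ.im) :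
    Summable fun k : ℤ => ‖thetaTerm x τ (k + r)‖ := by
  simp_rw [thetaTerm_int_add, norm_mul]
  exact ((summable_jacobiTheta₂_term_iff _ _).2 hτ).norm.mul_left _

lemma thetaTerm_half_sub_mul_four (x τ r₁ r₂ r₃ r₄ s : ℂ) (hs : s = r₁ + r₂ + r₃ + r₄) :
    thetaTerm x τ (s / 2 - r₁) * thetaTerm x τ (s / 2 - r₂) * thetaTerm x τ (s / 2 - r₃) *
      thetaTerm x τ (s / 2 - r₄) =
      thetaTerm x τ r₁ * thetaTerm x τ r₂ * thetaTerm x τ r₃ * thetaTerm x τ r₄ := by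
  simp only [thetaTerm, ← Complex.exp_add]
  congr 1
  subst hs
  ring

lemma quadProd_thetaTerm_half_quadReflect (x τ : ℂ) {v : ℤ × ℤ × ℤ × ℤ}
    (hv : Odd (quadSum v)) :
    quadProd (fun k : ℤ => thetaTerm x τ (k + 1 / 2)) (quadReflect v) =
      quadProd (fun k : ℤ => thetaTerm x τ k) v := by
  obtain ⟨a, b, c, d⟩ := v
  obtain ⟨m, hm, hreflect⟩ := exists_quadReflect_eq_of_odd hv
  have hm' : (2 * m + 1 : ℂ) = a + b + c + d := by exact_mod_cast hm
  have half (n : ℤ) : ((m - n : ℤ) : ℂ) + 1 / 2 = (2 * m + 1) / 2 - n := by push_cast; ring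
  simp only [hreflect, quadProd, half]
  exact thetaTerm_half_sub_mul_four x τ a b c d _ hm'

lemma tsum_odd_quadProd_thetaTerm_eq_half (x τ : ℂ) :
    ∑' v, {v | Odd (quadSum v)}.indicator (quadProd fun k : ℤ => thetaTerm x τ k) v =
      ∑' v, {v | Odd (quadSum v)}.indicator
        (quadProd fun k : ℤ => thetaTerm x τ (k + 1 / 2)) v := by
  conv_rhs => rw [← quadReflect.tsum_eq]
  refine tsum_congr fun v => ?_
  simp only [Set.indicator_apply, Set.mem_ofPred_eq, odd_quadSum_quadReflect_iff]
  split_ifs with hv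
  · exact (quadProd_thetaTerm_half_quadReflect x τ hv).symm
  · rfl

lemma jacobiθ₁_pow_four (x τ : ℂ) :
    jacobiθ₁ x τ ^ 4 = (∑' k : ℤ, (-1) ^ k * thetaTerm x τ (k + 1 / 2)) ^ 4 := by
  have h : jacobiθ₁ x τ = -I * ∑' k : ℤ, (-1) ^ k * thetaTerm x τ (k + 1 / 2) :=
    congrArg (-I * ·) <| tsum_congr fun k => congrArg ((-1) ^ k * ·) <| congrArg cexp <| by ring
  rw [h, mul_pow, neg_pow, I_pow_four]
  norm_num

lemma jacobiθ₂_eq_tsum (x τ : ℂ) : jacobiθ₂ x τ = ∑' k : ℤ, thetaTerm x τ (k + 1 / 2) :=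
  tsum_congr fun k => congrArg cexp <| by ring

lemma jacobiθ₃_eq_tsum (x τ : ℂ) : jacobiθ₃ x τ = ∑' k : ℤ, thetaTerm x τ k :=
  tsum_congr fun k => congrArg cexp <| by ring

lemma jacobiθ₄_eq_tsum (x τ : ℂ) : jacobiθ₄ x τ = ∑' k : ℤ, (-1) ^ k * thetaTerm x τ k :=
  tsum_congr fun k => congrArg ((-1) ^ k * ·) <| congrArg cexp <| by ring

end JacobiQuartic

open JacobiQuartic in
theorem jacobi_quartic_identity_general (x τ : ℂ) (hτ : 0 < τ.im) :
    jacobiθ₁ x τ ^ 4 + jacobiθ₃ x τ ^ 4 = jacobiθ₂ x τ ^ 4 + jacobiθ₄ x τ ^ 4 := by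
  have hint : Summable fun k : ℤ => ‖thetaTerm x τ k‖ := by
    simpa only [add_zero] using summable_norm_thetaTerm_int_add x 0 hτ
  have h34 := tsum_pow_four_sub_tsum_alternating_pow_four hint
  have h21 := tsum_pow_four_sub_tsum_alternating_pow_four
    (summable_norm_thetaTerm_int_add x (1 / 2) hτ)
  rw [← jacobiθ₃_eq_tsum, ← jacobiθ₄_eq_tsum, tsum_odd_quadProd_thetaTerm_eq_half] at h34
  rw [← jacobiθ₂_eq_tsum, ← jacobiθ₁_pow_four] at h21
  linear_combination h34 - h21
end

section
/- The Taylor coefficients of θ₃ in x are expressed through τ-derivatives of the theta constant: θ₃(x|τ) = ∑_{k=0}^∞ [(4πi)^k / (2k)!] · (d^k ϑ₃/dτ^k)(τ) · x^{2k}, for all x ∈ ℂ and τ in the upper half-plane. -/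
open scoped Real
open Complex

/-!
Since `θ₃(·|τ)` is even, `θ₃(x|τ) = ∑ₙ cosh(2πinx) e^{πin²τ}`. Expanding each `cosh` in its power
series gives a double series dominated by `∑ₙ e^{2π|n||x|} e^{-πn² Im τ} < ∞`, so the two sums may
be swapped. The coefficient of `x^{2k}` is then `(4πi)^k/(2k)! · ∑ₙ (πin²)^k e^{πin²τ}`, and the
last sum is `ϑ₃^{(k)}(τ)` by termwise differentiation, legitimate because the differentiated
series is dominated uniformly on each half-plane `Im τ > T > 0`.
-/

lemma jacobiθ₃_eq_jacobiTheta₂ (x τ : ℂ) : jacobiθ₃ x τ = jacobiTheta₂ x τ :=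
  tsum_congr fun n => congrArg cexp (by ring)

noncomputable def thetaConstDerivTerm (k : ℕ) (n : ℤ) (τ : ℂ) : ℂ :=
  (π * I * n ^ 2) ^ k * jacobiTheta₂_term n 0 τ

lemma hasDerivAt_thetaConstDerivTerm (k : ℕ) (n : ℤ) (τ : ℂ) :
    HasDerivAt (thetaConstDerivTerm k n) (thetaConstDerivTerm (k + 1) n τ) τ := by
  set c : ℂ := π * I * n ^ 2
  have hfun : thetaConstDerivTerm k n = fun t => c ^ k * cexp (c * t) := by
    ext t; simp [thetaConstDerivTerm, jacobiTheta₂_term, c]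
  rw [hfun]
  refine (((hasDerivAt_id' τ).const_mul c).cexp.const_mul (c ^ k)).congr_deriv ?_
  simp only [thetaConstDerivTerm, jacobiTheta₂_term, c, mul_zero, zero_add, mul_one]
  ring

lemma norm_thetaConstDerivTerm_le (k : ℕ) (n : ℤ) {T : ℝ} (hT : 0 < T) {τ : ℂ} (hτ : T ≤ τ.im) :
    ‖thetaConstDerivTerm k n τ‖ ≤ π ^ k * |n| ^ (2 * k) * rexp (-π * T * n ^ 2) := by
  have hterm := norm_jacobiTheta₂_term_le hT (z := 0) (S := 0) (by simp) hτ n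
  rw [thetaConstDerivTerm, norm_mul, norm_pow, mul_assoc]
  refine mul_le_mul (le_of_eq ?_) (hterm.trans_eq ?_) (norm_nonneg _) (by positivity)
  · simp [abs_of_pos Real.pi_pos, pow_mul, mul_pow]
  · ring_nf

lemma summable_pow_mul_exp_neg_pi_mul_sq (k : ℕ) {T : ℝ} (hT : 0 < T) :
    Summable fun n : ℤ => π ^ k * |n| ^ (2 * k) * rexp (-π * T * n ^ 2) := by
  refine ((summable_pow_mul_jacobiTheta₂_term_bound 0 hT (2 * k)).mul_left (π ^ k)).congr
    fun n => ?_
  rw [mul_assoc]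
  ring_nf

lemma hasDerivAt_tsum_thetaConstDerivTerm (k : ℕ) {τ : ℂ} (hτ : 0 < τ.im) :
    HasDerivAt (fun t => ∑' n : ℤ, thetaConstDerivTerm k n t)
      (∑' n : ℤ, thetaConstDerivTerm (k + 1) n τ) τ := by
  have hT : 0 < τ.im / 2 := half_pos hτ
  have hmem : τ ∈ {t : ℂ | τ.im / 2 < t.im} := half_lt_self hτ
  exact hasDerivAt_tsum_of_isPreconnected (summable_pow_mul_exp_neg_pi_mul_sq (k + 1) hT)
    (isOpen_lt continuous_const continuous_im) (convex_halfSpace_im_gt _).isPreconnected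
    (fun n t _ => hasDerivAt_thetaConstDerivTerm k n t)
    (fun n t ht => norm_thetaConstDerivTerm_le (k + 1) n hT ht.le) hmem
    ((summable_pow_mul_exp_neg_pi_mul_sq k hT).of_norm_bounded
      fun n => norm_thetaConstDerivTerm_le k n hT hmem.le) hmem

lemma iteratedDeriv_jacobiTheta₂_zero (k : ℕ) {τ : ℂ} (hτ : 0 < τ.im) :
    iteratedDeriv k (jacobiTheta₂ 0) τ = ∑' n : ℤ, thetaConstDerivTerm k n τ := by
  induction k generalizing τ with
  | zero => simp [thetaConstDerivTerm, jacobiTheta₂]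
  | succ k ih =>
    have hev : iteratedDeriv k (jacobiTheta₂ 0) =ᶠ[nhds τ]
        fun t => ∑' n : ℤ, thetaConstDerivTerm k n t :=
      Filter.eventually_of_mem ((isOpen_lt continuous_const continuous_im).mem_nhds hτ)
        fun t ht => ih ht
    rw [iteratedDeriv_succ, hev.deriv_eq]
    exact (hasDerivAt_tsum_thetaConstDerivTerm k hτ).deriv

lemma hasSum_norm_cosh_series (w : ℂ) :
    HasSum (fun k : ℕ => ‖w ^ (2 * k) / ((2 * k).factorial : ℂ)‖) (Real.cosh ‖w‖) := by
  simpa [norm_div, norm_pow] using Real.hasSum_cosh ‖w‖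

lemma jacobiTheta₂_eq_tsum_cosh (z : ℂ) {τ : ℂ} (hτ : 0 < τ.im) :
    jacobiTheta₂ z τ = ∑' n : ℤ, cosh (2 * π * I * n * z) * jacobiTheta₂_term n 0 τ := by
  have hterm (n : ℤ) : cosh (2 * π * I * n * z) * jacobiTheta₂_term n 0 τ
      = (jacobiTheta₂_term n z τ + jacobiTheta₂_term n (-z) τ) / 2 := by
    simp only [Complex.cosh, jacobiTheta₂_term, div_mul_eq_mul_div, add_mul, ← Complex.exp_add]
    ring_nf
  rw [tsum_congr hterm, tsum_div_const, ((summable_jacobiTheta₂_term_iff z τ).2 hτ).tsum_add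
    ((summable_jacobiTheta₂_term_iff (-z) τ).2 hτ), ← jacobiTheta₂, ← jacobiTheta₂,
    jacobiTheta₂_neg_left]
  ring

lemma summable_norm_cosh_series_mul_jacobiTheta₂_term (z : ℂ) {τ : ℂ} (hτ : 0 < τ.im) :
    Summable fun p : ℤ × ℕ => ‖(2 * π * I * p.1 * z) ^ (2 * p.2) / ((2 * p.2).factorial : ℂ) *
      jacobiTheta₂_term p.1 0 τ‖ := by
  simp only [norm_mul (_ / _)]
  have hinner (n : ℤ) : HasSum
      (fun k : ℕ => ‖(2 * π * I * n * z) ^ (2 * k) / ((2 * k).factorial : ℂ)‖ *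
        ‖jacobiTheta₂_term n 0 τ‖)
      (Real.cosh ‖2 * π * I * n * z‖ * ‖jacobiTheta₂_term n 0 τ‖) :=
    (hasSum_norm_cosh_series _).mul_right _
  refine (summable_prod_of_nonneg fun _ => by positivity).2
    ⟨fun n => (hinner n).summable, ?_⟩
  simp only [fun n => (hinner n).tsum_eq]
  refine (summable_pow_mul_jacobiTheta₂_term_bound ‖z‖ hτ 0).of_nonneg_of_le
    (fun n => by positivity) fun n => ?_
  have hnorm : ‖2 * π * I * n * z‖ = 2 * π * |(n : ℝ)| * ‖z‖ := by
    simp [abs_of_pos Real.pi_pos]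
  have hcosh : Real.cosh ‖2 * π * I * n * z‖ ≤ rexp (2 * π * |(n : ℝ)| * ‖z‖) := by
    rw [Real.cosh_eq, hnorm]
    have : rexp (-(2 * π * |(n : ℝ)| * ‖z‖)) ≤ rexp (2 * π * |(n : ℝ)| * ‖z‖) :=
      Real.exp_le_exp.2 (neg_le_self (by positivity))
    linarith
  rw [norm_jacobiTheta₂_term, pow_zero, one_mul]
  calc Real.cosh ‖2 * π * I * n * z‖ * rexp (-π * n ^ 2 * τ.im - 2 * π * n * (0 : ℂ).im)
      ≤ rexp (2 * π * |(n : ℝ)| * ‖z‖) * rexp (-π * n ^ 2 * τ.im - 2 * π * n * (0 : ℂ).im) :=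
        mul_le_mul_of_nonneg_right hcosh (Real.exp_nonneg _)
    _ = _ := by
        rw [← Real.exp_add, zero_im]
        push_cast [Int.cast_abs]
        ring_nf

theorem theta3_taylor_via_theta_constant (x τ : ℂ) (hτ : 0 < τ.im) :
    jacobiθ₃ x τ =
      ∑' k : ℕ, (4 * (π : ℂ) * I) ^ k / ((2 * k).factorial : ℂ) *
        iteratedDeriv k (fun t => jacobiθ₃ 0 t) τ * x ^ (2 * k) := by
  have hθ : (fun t => jacobiθ₃ 0 t) = jacobiTheta₂ 0 := funext (jacobiθ₃_eq_jacobiTheta₂ 0)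
  have hterm (n : ℤ) (k : ℕ) :
      (2 * π * I * n * x) ^ (2 * k) / ((2 * k).factorial : ℂ) * jacobiTheta₂_term n 0 τ =
        (4 * π * I) ^ k / ((2 * k).factorial : ℂ) * thetaConstDerivTerm k n τ * x ^ (2 * k) := by
    rw [thetaConstDerivTerm, pow_mul, pow_mul x, show (2 * π * I * n * x) ^ 2 =
      (4 * π * I) * (π * I * n ^ 2) * x ^ 2 by ring, mul_pow, mul_pow]
    ring
  calc jacobiθ₃ x τ = ∑' n : ℤ, cosh (2 * π * I * n * x) * jacobiTheta₂_term n 0 τ := by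
        rw [jacobiθ₃_eq_jacobiTheta₂, jacobiTheta₂_eq_tsum_cosh x hτ]
    _ = ∑' n : ℤ, ∑' k : ℕ,
          (2 * π * I * n * x) ^ (2 * k) / ((2 * k).factorial : ℂ) * jacobiTheta₂_term n 0 τ := by
        simp_rw [cosh_eq_tsum, tsum_mul_right]
    _ = ∑' k : ℕ, ∑' n : ℤ,
          (2 * π * I * n * x) ^ (2 * k) / ((2 * k).factorial : ℂ) * jacobiTheta₂_term n 0 τ :=
        (summable_norm_cosh_series_mul_jacobiTheta₂_term x hτ).of_norm.tsum_comm.symm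
    _ = _ := by
        simp_rw [hterm, tsum_mul_right, tsum_mul_left, hθ, iteratedDeriv_jacobiTheta₂_zero _ hτ]
end
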